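/- Eckart–Young for the TQt-SVD (error formula): let A have TQt-SVD A = U ⋆_QT D ⋆_QT V^H with the transforms T_n = c_n U_n (c_n nonzero real, U_n unitary quaternion), and let A_s = Σ_{k=1}^{s} U(:,k,:,…,:) ⋆_QT D(k,k,:,…,:) ⋆_QT V(:,k,:,…,:)^H be the TQt-rank-s truncation. Then ‖A − A_s‖_F² = (∏_n c_n⁻²) · Σ_{k=s+1}^{r} ‖D̂(k,k,:,…,:)‖_F², where r is the TQt-rank of A; in particular, with the singular-value convention σ_k = ‖D(k,k,:,…,:)‖_F one obtains ‖A − A_s‖_F² = Σ_{k=s+1}^{r} σ_k² when the product of the constants ∏|c_n| = 1. -/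

import Mathlib

/-!
In the transform domain each frontal slice of `A - A_s` is `Û_ν (D̂_ν - D̂_ν⁽ˢ⁾) V̂_νᴴ`; as `Û_ν`
and `V̂_ν` are unitary, its squared Frobenius norm is `∑_{k ≥ s} σ_ν(k)²`, and summing over `ν`
gives `∑_{k ≥ s} ‖D̂(k,k,:)‖²`. The inverse transform `c⁻¹ U₀ᴴ` is `|c|⁻¹` times an isometry on
each tube fibre, so it scales the Frobenius norm of a tensor and its tube norms by `|c|⁻¹` and
preserves the TQt-rank. Since every `σ_ν` is antitone, the nonzero diagonal tubes of `D̂` are the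
first `r` ones, so the tail sum stops at the TQt-rank.
-/

open scoped Quaternion
open Matrix

noncomputable section

/-- An `L`th-order quaternion tensor, modeled as a family of frontal-slice
quaternion matrices indexed by the multi-index `ν = (n₃,…,n_L) : ι`. -/
abbrev QT (ι : Type*) (m n : ℕ) := ι → Matrix (Fin m) (Fin n) ℍ[ℝ]

variable {ι : Type*} [Fintype ι] [DecidableEq ι]

/-- The hat transform `Â = A ×₃ T₃ ⋯ ×_L T_L`, with `T` the combined invertible
quaternion transform acting on the tube fibers. -/
def hatT (T : Matrix ι ι ℍ[ℝ]) {m n : ℕ} (A : QT ι m n) : QT ι m n :=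
  fun ν i j => ∑ μ, T ν μ * A μ i j

/-- The facewise product `⋆_QF`: slice-wise quaternion matrix product. -/
def qf {m p n : ℕ} (A : QT ι m p) (B : QT ι p n) : QT ι m n :=
  fun ν => A ν * B ν

/-- The `⋆_QT` product; `T` is the combined transform and `S` its inverse. -/
def qt (T S : Matrix ι ι ℍ[ℝ]) {m p n : ℕ} (A : QT ι m p) (B : QT ι p n) : QT ι m n :=
  hatT S (qf (hatT T A) (hatT T B))

/-- The identity quaternion tensor: every transform-domain slice is `I_P`. -/
def qtId (S : Matrix ι ι ℍ[ℝ]) (p : ℕ) : QT ι p p := hatT S (fun _ => 1)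

/-- Conjugate transpose, defined slice-wise in the transform domain. -/
def qtH (T S : Matrix ι ι ℍ[ℝ]) {m n : ℕ} (A : QT ι m n) : QT ι n m :=
  hatT S (fun ν => (hatT T A ν)ᴴ)

/-- A quaternion matrix is unitary. -/
def qUnitaryM {p : Type*} [Fintype p] [DecidableEq p] (Q : Matrix p p ℍ[ℝ]) : Prop :=
  Qᴴ * Q = 1 ∧ Q * Qᴴ = 1

/-- A quaternion tensor is unitary for the `⋆_QT` product. -/
def qtUnitary (T S : Matrix ι ι ℍ[ℝ]) {p : ℕ} (U : QT ι p p) : Prop :=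
  qt T S (qtH T S U) U = qtId S p ∧ qt T S U (qtH T S U) = qtId S p

/-- Frobenius norm of a quaternion tensor. -/
def frob {m n : ℕ} (A : QT ι m n) : ℝ :=
  Real.sqrt (∑ ν, ∑ i, ∑ j, ‖A ν i j‖ ^ 2)

/-- Frobenius norm of a quaternion matrix. -/
def frobM {m n : ℕ} (M : Matrix (Fin m) (Fin n) ℍ[ℝ]) : ℝ :=
  Real.sqrt (∑ i, ∑ j, ‖M i j‖ ^ 2)

/-- The `k`-th diagonal tube `D(k,k,:,…,:)` of a quaternion tensor. -/
def diagTube {m n : ℕ} (D : QT ι m n) (k : ℕ) : ι → ℍ[ℝ] :=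
  fun ν => if h : k < m ∧ k < n then D ν ⟨k, h.1⟩ ⟨k, h.2⟩ else 0

/-- Frobenius norm of the `k`-th diagonal tube. -/
def tubeNorm {m n : ℕ} (D : QT ι m n) (k : ℕ) : ℝ :=
  Real.sqrt (∑ ν, ‖diagTube D k ν‖ ^ 2)

/-- The TQt-rank: the number of nonzero diagonal tubes of the f-diagonal factor. -/
def tqtRank {m n : ℕ} (D : QT ι m n) : ℕ :=
  ((Finset.range (min m n)).filter (fun k => 0 < tubeNorm D k)).card

/-- Rank of a quaternion matrix: dimension of the span of its columns as a
right `ℍ`-module (i.e. a module over `ℍᵐᵒᵖ`). -/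
def qrank {m n : ℕ} (M : Matrix (Fin m) (Fin n) ℍ[ℝ]) : ℕ :=
  Module.finrank ℍ[ℝ]ᵐᵒᵖ
    (Submodule.span ℍ[ℝ]ᵐᵒᵖ (Set.range fun j : Fin n => fun i : Fin m => M i j))

/-- Real diagonal quaternion matrix with diagonal entries `σ 0, σ 1, …`. -/
def realDiag (m n : ℕ) (σ : ℕ → ℝ) : Matrix (Fin m) (Fin n) ℍ[ℝ] :=
  fun i j => if (i : ℕ) = (j : ℕ) then ((σ (i : ℕ) : ℝ) : ℍ[ℝ]) else 0

/-- Truncated real diagonal matrix keeping only the first `s` diagonal entries. -/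
def realDiagTrunc (m n : ℕ) (σ : ℕ → ℝ) (s : ℕ) : Matrix (Fin m) (Fin n) ℍ[ℝ] :=
  fun i j => if (i : ℕ) = (j : ℕ) ∧ (i : ℕ) < s then ((σ (i : ℕ) : ℝ) : ℍ[ℝ]) else 0

namespace Quaternion

variable {κ m n : Type*} [Fintype κ] [Fintype m] [Fintype n]

theorem star_dotProduct_self (x : κ → ℍ[ℝ]) :
    star x ⬝ᵥ x = ((∑ i, ‖x i‖ ^ 2 : ℝ) : ℍ[ℝ]) := by
  rw [← algebraMap_def, map_sum, dotProduct]
  simp only [Pi.star_apply, star_mul_self, normSq_eq_norm_mul_self, sq, algebraMap_def]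

theorem sum_norm_sq_mulVec_of_isometry [DecidableEq κ] {Q : Matrix κ κ ℍ[ℝ]} (hQ : Qᴴ * Q = 1)
    (x : κ → ℍ[ℝ]) : ∑ i, ‖(Q *ᵥ x) i‖ ^ 2 = ∑ i, ‖x i‖ ^ 2 := by
  rw [← coe_inj, ← star_dotProduct_self, ← star_dotProduct_self, star_mulVec,
    ← dotProduct_mulVec, mulVec_mulVec, hQ, one_mulVec]

theorem sum_norm_sq_smul_mulVec [DecidableEq κ] (a : ℝ) {Q : Matrix κ κ ℍ[ℝ]}
    (hQ : Qᴴ * Q = 1) (x : κ → ℍ[ℝ]) :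
    ∑ i, ‖((a • Q) *ᵥ x) i‖ ^ 2 = a ^ 2 * ∑ i, ‖x i‖ ^ 2 := by
  simp only [smul_mulVec, Pi.smul_apply, norm_smul, mul_pow, Real.norm_eq_abs, sq_abs,
    ← Finset.mul_sum, sum_norm_sq_mulVec_of_isometry hQ]

theorem sum_sum_norm_sq_conjTranspose (M : Matrix m n ℍ[ℝ]) :
    ∑ j, ∑ i, ‖Mᴴ j i‖ ^ 2 = ∑ i, ∑ j, ‖M i j‖ ^ 2 := by
  simp only [conjTranspose_apply, norm_star]
  exact Finset.sum_comm

theorem sum_sum_norm_sq_mul_of_isometry [DecidableEq m] {P : Matrix m m ℍ[ℝ]} (hP : Pᴴ * P = 1)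
    (M : Matrix m n ℍ[ℝ]) : ∑ i, ∑ j, ‖(P * M) i j‖ ^ 2 = ∑ i, ∑ j, ‖M i j‖ ^ 2 := by
  rw [Finset.sum_comm, Finset.sum_comm (γ := m)]
  exact Finset.sum_congr rfl fun j _ => sum_norm_sq_mulVec_of_isometry hP fun i => M i j

theorem sum_sum_norm_sq_mul_conjTranspose_of_isometry [DecidableEq n] {Q : Matrix n n ℍ[ℝ]}
    (hQ : Qᴴ * Q = 1) (M : Matrix m n ℍ[ℝ]) :
    ∑ i, ∑ j, ‖(M * Qᴴ) i j‖ ^ 2 = ∑ i, ∑ j, ‖M i j‖ ^ 2 := by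
  rw [← sum_sum_norm_sq_conjTranspose, conjTranspose_mul, conjTranspose_conjTranspose,
    sum_sum_norm_sq_mul_of_isometry hQ, sum_sum_norm_sq_conjTranspose]

end Quaternion

theorem qUnitaryM.smul_mul_inv_smul {κ : Type*} [Fintype κ] [DecidableEq κ]
    {Q : Matrix κ κ ℍ[ℝ]} (hQ : qUnitaryM Q) {a : ℝ} (ha : a ≠ 0) :
    (a • Q) * (a⁻¹ • Qᴴ) = 1 ∧ (a⁻¹ • Qᴴ) * (a • Q) = 1 := by
  simp only [Matrix.smul_mul, Matrix.mul_smul, smul_smul, hQ.1, hQ.2, mul_inv_cancel₀ ha,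
    inv_mul_cancel₀ ha, one_smul, and_self]

section Transform

omit [DecidableEq ι]

variable {m n p : ℕ}

theorem hatT_hatT (T S : Matrix ι ι ℍ[ℝ]) (X : QT ι m n) :
    hatT T (hatT S X) = hatT (T * S) X := by
  funext ν i j
  simp only [hatT, mul_apply, Finset.mul_sum, Finset.sum_mul, mul_assoc]
  exact Finset.sum_comm

theorem hatT_sub (T : Matrix ι ι ℍ[ℝ]) (X Y : QT ι m n) :
    hatT T (X - Y) = hatT T X - hatT T Y := by
  funext ν i j
  simp [hatT, mul_sub, Finset.sum_sub_distrib]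

theorem hatT_hatT_of_mul_eq_one [DecidableEq ι] {T S : Matrix ι ι ℍ[ℝ]} (h : T * S = 1)
    (X : QT ι m n) : hatT T (hatT S X) = X := by
  funext ν i j
  rw [hatT_hatT, h]
  simp [hatT, one_apply]

variable {T S : Matrix ι ι ℍ[ℝ]}

theorem hatT_qt [DecidableEq ι] (h : T * S = 1) (A : QT ι m p) (B : QT ι p n) :
    hatT T (qt T S A B) = fun ν => hatT T A ν * hatT T B ν := by
  rw [qt, hatT_hatT_of_mul_eq_one h]
  rfl

theorem hatT_qtH [DecidableEq ι] (h : T * S = 1) (A : QT ι m n) :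
    hatT T (qtH T S A) = fun ν => (hatT T A ν)ᴴ := by
  rw [qtH, hatT_hatT_of_mul_eq_one h]

theorem hatT_qt_qt_qtH [DecidableEq ι] (h : T * S = 1) (U : QT ι m m) (X : QT ι m n)
    (V : QT ι n n) :
    hatT T (qt T S U (qt T S X (qtH T S V))) = fun ν => hatT T U ν * hatT T X ν * (hatT T V ν)ᴴ := by
  simp only [hatT_qt h, hatT_qtH h, Matrix.mul_assoc]

theorem qtUnitary.conjTranspose_hatT_mul_hatT [DecidableEq ι] (h : T * S = 1) {U : QT ι p p}
    (hU : qtUnitary T S U) (ν : ι) : (hatT T U ν)ᴴ * hatT T U ν = 1 := by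
  have := congrFun (congrArg (hatT T) hU.1) ν
  rwa [hatT_qt h, hatT_qtH h, qtId, hatT_hatT_of_mul_eq_one h] at this

end Transform

section Norms

omit [DecidableEq ι]

variable {m n : ℕ}

theorem frob_sq (X : QT ι m n) : frob X ^ 2 = ∑ ν, ∑ i, ∑ j, ‖X ν i j‖ ^ 2 :=
  Real.sq_sqrt (by positivity)

theorem tubeNorm_sq (X : QT ι m n) (k : ℕ) : tubeNorm X k ^ 2 = ∑ ν, ‖diagTube X k ν‖ ^ 2 :=
  Real.sq_sqrt (by positivity)

theorem diagTube_hatT (S : Matrix ι ι ℍ[ℝ]) (X : QT ι m n) (k : ℕ) :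
    diagTube (hatT S X) k = S *ᵥ diagTube X k := by
  funext ν
  by_cases hk : k < m ∧ k < n
  · simp only [diagTube, dif_pos hk, hatT, mulVec, dotProduct]
  · simp [diagTube, dif_neg hk, mulVec, dotProduct]

theorem frob_hatT_smul [DecidableEq ι] (a : ℝ) {Q : Matrix ι ι ℍ[ℝ]} (hQ : Qᴴ * Q = 1)
    (X : QT ι m n) : frob (hatT (a • Q) X) = |a| * frob X := by
  have h : ∀ i j, ∑ ν, ‖hatT (a • Q) X ν i j‖ ^ 2 = a ^ 2 * ∑ ν, ‖X ν i j‖ ^ 2 :=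
    fun i j => Quaternion.sum_norm_sq_smul_mulVec a hQ fun μ => X μ i j
  have hswap : ∀ Y : QT ι m n, ∑ ν, ∑ i, ∑ j, ‖Y ν i j‖ ^ 2 = ∑ i, ∑ j, ∑ ν, ‖Y ν i j‖ ^ 2 :=
    fun Y => Finset.sum_comm.trans (Finset.sum_congr rfl fun _ _ => Finset.sum_comm)
  rw [frob, frob, hswap, hswap]
  simp only [h, ← Finset.mul_sum]
  rw [Real.sqrt_mul (sq_nonneg a), Real.sqrt_sq_eq_abs]

theorem tubeNorm_hatT_smul [DecidableEq ι] (a : ℝ) {Q : Matrix ι ι ℍ[ℝ]} (hQ : Qᴴ * Q = 1)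
    (X : QT ι m n) (k : ℕ) : tubeNorm (hatT (a • Q) X) k = |a| * tubeNorm X k := by
  rw [tubeNorm, tubeNorm, diagTube_hatT, Quaternion.sum_norm_sq_smul_mulVec a hQ,
    Real.sqrt_mul (sq_nonneg a), Real.sqrt_sq_eq_abs]

theorem tqtRank_hatT_smul [DecidableEq ι] {a : ℝ} (ha : a ≠ 0) {Q : Matrix ι ι ℍ[ℝ]}
    (hQ : Qᴴ * Q = 1) (X : QT ι m n) : tqtRank (hatT (a • Q) X) = tqtRank X := by
  simp only [tqtRank, tubeNorm_hatT_smul a hQ, mul_pos_iff_of_pos_left (abs_pos.mpr ha)]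

theorem frob_mul_mul_conjTranspose {P : QT ι m m} {Q : QT ι n n}
    (hP : ∀ ν, (P ν)ᴴ * P ν = 1) (hQ : ∀ ν, (Q ν)ᴴ * Q ν = 1) (M : QT ι m n) :
    frob (fun ν => P ν * M ν * (Q ν)ᴴ) = frob M := by
  simp only [frob, Quaternion.sum_sum_norm_sq_mul_conjTranspose_of_isometry (hQ _),
    Quaternion.sum_sum_norm_sq_mul_of_isometry (hP _)]

end Norms

open Finset in
theorem Antitone.eq_zero_of_card_filter_pos_le {f : ℕ → ℝ} (hf : Antitone f)
    (hf0 : ∀ k, 0 ≤ f k) {n k : ℕ} (hkn : k < n) (hk : #{j ∈ range n | 0 < f j} ≤ k) :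
    f k = 0 := by
  refine (hf0 k).antisymm' (not_lt.mp fun hpos => ?_)
  have hsub : range (k + 1) ⊆ {j ∈ range n | 0 < f j} := fun j hj => by
    rw [mem_range] at hj
    exact mem_filter.mpr ⟨mem_range.mpr (by omega), hpos.trans_le (hf (by omega))⟩
  have := card_le_card hsub
  rw [card_range] at this
  omega

section RealDiag

variable {m n : ℕ}

theorem realDiag_sub_realDiagTrunc (σ : ℕ → ℝ) (s : ℕ) :
    realDiag m n σ - realDiagTrunc m n σ s = realDiag m n fun k => if s ≤ k then σ k else 0 := by
  funext i j
  by_cases hsi : s ≤ (i : ℕ)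
  · simp [realDiag, realDiagTrunc, hsi, not_lt.mpr hsi]
  · simp [realDiag, realDiagTrunc, hsi, lt_of_not_ge hsi]

theorem sum_sum_norm_sq_realDiag (σ : ℕ → ℝ) :
    ∑ i, ∑ j, ‖realDiag m n σ i j‖ ^ 2 = ∑ k ∈ Finset.range (min m n), σ k ^ 2 := by
  have hrow : ∀ i : Fin m, ∑ j, ‖realDiag m n σ i j‖ ^ 2 = if (i : ℕ) < n then σ i ^ 2 else 0 := by
    intro i
    simp only [realDiag, apply_ite (‖·‖ ^ 2), Quaternion.norm_coe, Real.norm_eq_abs, sq_abs,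
      norm_zero, zero_pow two_ne_zero]
    rw [Fin.sum_univ_eq_sum_range (fun j => if (i : ℕ) = j then σ i ^ 2 else 0),
      Finset.sum_ite_eq]
    simp only [Finset.mem_range]
  simp only [hrow]
  rw [Fin.sum_univ_eq_sum_range (fun k => if k < n then σ k ^ 2 else 0), ← Finset.sum_filter]
  congr 1
  ext k
  simp

end RealDiag

section RealDiagTensor

omit [DecidableEq ι]

variable {m n : ℕ}

def realDiagTensor (m n : ℕ) (σ : ι → ℕ → ℝ) : QT ι m n := fun ν => realDiag m n (σ ν)

theorem tqtRank_le_min (X : QT ι m n) : tqtRank X ≤ min m n :=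
  (Finset.card_filter_le _ _).trans (Finset.card_range _).le

theorem tubeNorm_nonneg (X : QT ι m n) (k : ℕ) : 0 ≤ tubeNorm X k :=
  Real.sqrt_nonneg _

theorem tubeNorm_realDiagTensor_sq (σ : ι → ℕ → ℝ) (k : ℕ) :
    tubeNorm (realDiagTensor m n σ) k ^ 2 = if k < min m n then ∑ ν, σ ν k ^ 2 else 0 := by
  rw [tubeNorm_sq]
  by_cases hk : k < m ∧ k < n
  · simp [diagTube, realDiagTensor, realDiag, hk, Quaternion.norm_coe]
  · simp [diagTube, hk]

variable {σ : ι → ℕ → ℝ} (hσ0 : ∀ ν k, 0 ≤ σ ν k) (hσa : ∀ ν, Antitone (σ ν))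
include hσ0 hσa

theorem antitone_tubeNorm_realDiagTensor : Antitone (tubeNorm (realDiagTensor m n σ)) := by
  intro j k hjk
  rw [← pow_le_pow_iff_left₀ (tubeNorm_nonneg _ _) (tubeNorm_nonneg _ _) two_ne_zero,
    tubeNorm_realDiagTensor_sq, tubeNorm_realDiagTensor_sq]
  split_ifs with hk hj hj
  · exact Finset.sum_le_sum fun ν _ => pow_le_pow_left₀ (hσ0 ν k) (hσa ν hjk) 2
  · omega
  · positivity
  · rfl

theorem tubeNorm_realDiagTensor_eq_zero {k : ℕ} (hk : tqtRank (realDiagTensor m n σ) ≤ k) :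
    tubeNorm (realDiagTensor m n σ) k = 0 := by
  by_cases hkmin : k < min m n
  · exact (antitone_tubeNorm_realDiagTensor hσ0 hσa).eq_zero_of_card_filter_pos_le
      (tubeNorm_nonneg _) hkmin hk
  · simpa [hkmin] using tubeNorm_realDiagTensor_sq (m := m) (n := n) σ k

theorem frob_realDiag_sub_realDiagTrunc_sq {s : ℕ} (hs : s ≤ tqtRank (realDiagTensor m n σ)) :
    frob (fun ν => realDiag m n (σ ν) - realDiagTrunc m n (σ ν) s) ^ 2
      = ∑ k ∈ Finset.Ico s (tqtRank (realDiagTensor m n σ)),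
          tubeNorm (realDiagTensor m n σ) k ^ 2 := by
  have htail : ∑ k ∈ Finset.Ico (tqtRank (realDiagTensor m n σ)) (min m n),
      tubeNorm (realDiagTensor m n σ) k ^ 2 = 0 :=
    Finset.sum_eq_zero fun k hk => by
      rw [tubeNorm_realDiagTensor_eq_zero hσ0 hσa (Finset.mem_Ico.mp hk).1, sq, zero_mul]
  rw [← add_zero (Finset.sum _ _), ← htail, Finset.sum_Ico_consecutive _ hs (tqtRank_le_min _),
    frob_sq]
  simp only [realDiag_sub_realDiagTrunc, sum_sum_norm_sq_realDiag, apply_ite (· ^ 2),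
    zero_pow two_ne_zero]
  rw [Finset.sum_comm]
  simp only [Finset.sum_ite_irrel, Finset.sum_const_zero]
  rw [← Finset.sum_filter, Finset.range_eq_Ico, Finset.Ico_filter_le, Nat.zero_max]
  refine Finset.sum_congr rfl fun k hk => ?_
  rw [tubeNorm_realDiagTensor_sq, if_pos (Finset.mem_Ico.mp hk).2]

end RealDiagTensor

/-- Eckart–Young error formula for the TQt-SVD truncation. -/
theorem stmt8 {ι : Type*} [Fintype ι] [DecidableEq ι]
    {K : ℕ} (cs : Fin K → ℝ) (hcs : ∀ k, cs k ≠ 0)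
    (U₀ : Matrix ι ι ℍ[ℝ]) (hU₀ : qUnitaryM U₀)
    (T S : Matrix ι ι ℍ[ℝ]) (hT : T = (∏ k, cs k) • U₀) (hS : S = (∏ k, cs k)⁻¹ • U₀ᴴ)
    {N1 N2 : ℕ} (A : QT ι N1 N2) (U : QT ι N1 N1) (D : QT ι N1 N2) (V : QT ι N2 N2)
    (hU : qtUnitary T S U) (hV : qtUnitary T S V)
    (σ : ι → ℕ → ℝ) (hD : ∀ ν, hatT T D ν = realDiag N1 N2 (σ ν))
    (hσ0 : ∀ ν k, 0 ≤ σ ν k) (hσa : ∀ ν, Antitone (σ ν))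
    (hA : A = qt T S U (qt T S D (qtH T S V)))
    (As : ℕ → QT ι N1 N2)
    (hAs : ∀ s, As s = qt T S U
      (qt T S (hatT S (fun ν => realDiagTrunc N1 N2 (σ ν) s)) (qtH T S V)))
    (s : ℕ) (hs : s ≤ tqtRank D) :
    frob (A - As s) ^ 2 =
      ((∏ k, cs k) ^ 2)⁻¹ * ∑ k ∈ Finset.Ico s (tqtRank D), tubeNorm (hatT T D) k ^ 2 ∧
    ((∏ k, |cs k|) = 1 →
      frob (A - As s) ^ 2 = ∑ k ∈ Finset.Ico s (tqtRank D), tubeNorm D k ^ 2) := by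
  set c : ℝ := ∏ k, cs k
  have hc : c ≠ 0 := Finset.prod_ne_zero_iff.mpr fun k _ => hcs k
  obtain ⟨hTS, hST⟩ : T * S = 1 ∧ S * T = 1 := hT ▸ hS ▸ hU₀.smul_mul_inv_smul hc
  have hU₀H : U₀ᴴᴴ * U₀ᴴ = 1 := by rw [conjTranspose_conjTranspose, hU₀.2]
  have hinv : ∀ X : QT ι N1 N2, X = hatT (c⁻¹ • U₀ᴴ) (hatT T X) := fun X => by
    rw [← hS, hatT_hatT_of_mul_eq_one hST]
  have hDhat : hatT T D = realDiagTensor N1 N2 σ := funext hD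
  have hrank : tqtRank D = tqtRank (realDiagTensor N1 N2 σ) := by
    rw [hinv D, tqtRank_hatT_smul (inv_ne_zero hc) hU₀H, hDhat]
  have herr : hatT T (A - As s) = fun ν => hatT T U ν *
      (realDiag N1 N2 (σ ν) - realDiagTrunc N1 N2 (σ ν) s) * (hatT T V ν)ᴴ := by
    funext ν
    simp only [hatT_sub, hA, hAs, hatT_qt_qt_qtH hTS, hatT_hatT_of_mul_eq_one hTS, hD,
      Pi.sub_apply, Matrix.mul_sub, Matrix.sub_mul]
  have main : frob (A - As s) ^ 2
      = (c ^ 2)⁻¹ * ∑ k ∈ Finset.Ico s (tqtRank D), tubeNorm (hatT T D) k ^ 2 := by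
    rw [hinv (A - As s), frob_hatT_smul _ hU₀H, herr, mul_pow, sq_abs, inv_pow,
      frob_mul_mul_conjTranspose (hU.conjTranspose_hatT_mul_hatT hTS)
        (hV.conjTranspose_hatT_mul_hatT hTS),
      frob_realDiag_sub_realDiagTrunc_sq hσ0 hσa (hrank ▸ hs), hrank, hDhat]
  refine ⟨main, fun habs => ?_⟩
  have hc2 : (c ^ 2)⁻¹ = 1 := by rw [← sq_abs, Finset.abs_prod, habs, one_pow, inv_one]
  have htube : ∀ k, tubeNorm D k = |c⁻¹| * tubeNorm (hatT T D) k := fun k => by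
    rw [← tubeNorm_hatT_smul _ hU₀H, ← hinv]
  rw [main, hc2, one_mul]
  refine Finset.sum_congr rfl fun k _ => ?_
  rw [htube, mul_pow, sq_abs, inv_pow, hc2, one_mul]
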